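/- Let T be a deterministic synchronous automaton (an S-automaton) with state set Q and alphabet Σ, acting on Σ^ω by partial length-preserving prefix-compatible maps. Then the generated semigroup S(T) (the closure of {q∘ : q ∈ Q} under composition of partial functions on Σ^ω) is finite if and only if there exists a constant C such that for every ξ ∈ Σ^ω the orbit Q* ∘ ξ has cardinality at most C. -/
import Mathlib


variable {Q A : Type*}

/-- The (partial) state reached after reading the first `n` letters of `ξ` from state `q`
in the deterministic partial automaton `δ`. -/
def pstate (δ : Q → A → Option (A × Q)) (ξ : ℕ → A) (q : Q) : ℕ → Option Q
  | 0 => some q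
  | n + 1 => (pstate δ ξ q n).bind fun s => (δ s (ξ n)).map Prod.snd

/-- The (partial) output letter at position `n` when reading `ξ` from state `q`. -/
def pout (δ : Q → A → Option (A × Q)) (ξ : ℕ → A) (q : Q) (n : ℕ) : Option A :=
  (pstate δ ξ q n).bind fun s => (δ s (ξ n)).map Prod.fst

open Classical in
/-- The partial action of a state `q` on an infinite word `ξ`. -/
noncomputable def pact (δ : Q → A → Option (A × Q)) (q : Q) (ξ : ℕ → A) : Option (ℕ → A) :=
  if h : ∀ n, (pout δ ξ q n).isSome then some fun n => (pout δ ξ q n).get (h n) else none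

/-- The partial action of a state sequence `q_n … q_1` (rightmost acting first). -/
noncomputable def pactW (δ : Q → A → Option (A × Q)) : List Q → (ℕ → A) → Option (ℕ → A)
  | [], ξ => some ξ
  | q :: w, ξ => (pactW δ w ξ).bind (pact δ q)

/-- The orbit `Q* ∘ ξ` of an infinite word. -/
def orbitP (δ : Q → A → Option (A × Q)) (ξ : ℕ → A) : Set (ℕ → A) :=
  {η | ∃ w : List Q, pactW δ w ξ = some η}

/-- The semigroup generated by the automaton: all partial maps on infinite words induced by
nonempty state sequences. -/
def sgpP (δ : Q → A → Option (A × Q)) : Set ((ℕ → A) → Option (ℕ → A)) :=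
  {F | ∃ w : List Q, w ≠ [] ∧ F = pactW δ w}

/-- Running a word through an abstract finite coded dynamics. -/
def runC {K : ℕ} (d : Q → Fin K → Option (Fin K)) : List Q → Fin K → Option (Fin K)
  | [], b => some b
  | q :: w, b => (runC d w b).bind (d q)

/-- Each orbit of size ≤ C can be coded into `Fin (C+1)` compatibly with the action. -/
theorem exists_code (δ : Q → A → Option (A × Q)) (C : ℕ) (ξ : ℕ → A)
    (hfin : (orbitP δ ξ).Finite) (hcard : (orbitP δ ξ).ncard ≤ C) :
    ∃ (d : Q → Fin (C + 1) → Option (Fin (C + 1))) (b : Fin (C + 1))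
      (code : Option (ℕ → A) → Option (Fin (C + 1))),
      (∀ w : List Q, code (pactW δ w ξ) = runC d w b) ∧
      code none = none ∧
      (∀ η η', η ∈ orbitP δ ξ → η' ∈ orbitP δ ξ →
        code (some η) = code (some η') → η = η') ∧
      (∀ η, η ∈ orbitP δ ξ → code (some η) ≠ none) := by
  classical
  haveI : Fintype (orbitP δ ξ) := hfin.fintype
  have hc : Fintype.card (orbitP δ ξ) ≤ Fintype.card (Fin (C + 1)) := by
    rw [Fintype.card_fin]
    have : (orbitP δ ξ).ncard = Fintype.card (orbitP δ ξ) := by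
      rw [← Nat.card_coe_set_eq, Nat.card_eq_fintype_card]
    omega
  obtain ⟨e⟩ := Function.Embedding.nonempty_of_card_le hc
  -- the code map
  set code : Option (ℕ → A) → Option (Fin (C + 1)) := fun o =>
    o.bind fun η => if h : η ∈ orbitP δ ξ then some (e ⟨η, h⟩) else none with hcode
  have hmem : ∀ η (h : η ∈ orbitP δ ξ), code (some η) = some (e ⟨η, h⟩) := by
    intro η h
    simp [hcode, h]
  -- partial inverse of e
  set einv : Fin (C + 1) → Option (orbitP δ ξ) := fun i =>
    if h : ∃ η : orbitP δ ξ, e η = i then some h.choose else none with heinv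
  have heinv_e : ∀ η : orbitP δ ξ, einv (e η) = some η := by
    intro η
    have h : ∃ η' : orbitP δ ξ, e η' = e η := ⟨η, rfl⟩
    have := h.choose_spec
    simp only [heinv, dif_pos h]
    exact congrArg some (e.injective this)
  set d : Q → Fin (C + 1) → Option (Fin (C + 1)) := fun q i =>
    (einv i).bind fun η => code (pact δ q η.val) with hd
  refine ⟨d, e ⟨ξ, ⟨[], rfl⟩⟩, code, ?_, rfl, ?_, ?_⟩
  · intro w
    induction w with
    | nil =>
      show code (some ξ) = some _
      rw [hmem ξ ⟨[], rfl⟩]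
    | cons q w ih =>
      show code ((pactW δ w ξ).bind (pact δ q)) = (runC d w _).bind (d q)
      rw [← ih]
      cases hw : pactW δ w ξ with
      | none => simp [hcode]
      | some η =>
        have hη : η ∈ orbitP δ ξ := ⟨w, hw⟩
        rw [Option.bind_some, hmem η hη, Option.bind_some, hd]
        simp only [heinv_e ⟨η, hη⟩, Option.bind_some]
  · intro η η' h h' hee
    rw [hmem η h, hmem η' h'] at hee
    have := e.injective (Option.some_injective _ hee)
    exact congrArg Subtype.val this
  · intro η h
    rw [hmem η h]
    exact Option.some_ne_none _

theorem stmt1 [Fintype Q] [Fintype A] (δ : Q → A → Option (A × Q)) :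
    (sgpP δ).Finite ↔
      ∃ C : ℕ, ∀ ξ : ℕ → A, (orbitP δ ξ).Finite ∧ (orbitP δ ξ).ncard ≤ C := by
  classical
  constructor
  · intro hS
    refine ⟨(sgpP δ).ncard + 1, fun ξ => ?_⟩
    have hsub : orbitP δ ξ ⊆ insert ξ ((fun F => (F ξ).getD ξ) '' sgpP δ) := by
      rintro η ⟨w, hw⟩
      cases w with
      | nil =>
        left
        exact (Option.some_injective _ hw).symm
      | cons q w' =>
        right
        exact ⟨pactW δ (q :: w'), ⟨q :: w', List.cons_ne_nil q w', rfl⟩,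
          by show (pactW δ (q :: w') ξ).getD ξ = η; rw [hw]; rfl⟩
    have hfin : (insert ξ ((fun F => (F ξ).getD ξ) '' sgpP δ)).Finite :=
      (hS.image _).insert ξ
    refine ⟨hfin.subset hsub, ?_⟩
    calc (orbitP δ ξ).ncard ≤ (insert ξ ((fun F => (F ξ).getD ξ) '' sgpP δ)).ncard :=
          Set.ncard_le_ncard hsub hfin
      _ ≤ ((fun F => (F ξ).getD ξ) '' sgpP δ).ncard + 1 := Set.ncard_insert_le _ _
      _ ≤ (sgpP δ).ncard + 1 := Nat.add_le_add_right (Set.ncard_image_le hS) 1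
  · rintro ⟨C, hC⟩
    -- map each element of the semigroup to its "profile" on all coded dynamics
    rw [← Set.finite_coe_iff]
    have key : ∀ F : sgpP δ, ∃ w : List Q, F.val = pactW δ w :=
      fun F => ⟨F.property.choose, F.property.choose_spec.2⟩
    choose wd hwd using key
    set Ψ : sgpP δ → ((Q → Fin (C + 1) → Option (Fin (C + 1))) × Fin (C + 1) →
        Option (Fin (C + 1))) := fun F p => runC p.1 (wd F) p.2 with hΨ
    have hinj : Function.Injective Ψ := by
      intro F G hFG
      apply Subtype.ext
      funext ξ
      obtain ⟨d, b, code, hrun, hnone, hinjc, hne⟩ :=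
        exists_code δ C ξ (hC ξ).1 (hC ξ).2
      have h1 : code (F.val ξ) = code (G.val ξ) := by
        rw [hwd F, hwd G, hrun, hrun]
        exact congrFun hFG (d, b)
      cases hF : F.val ξ with
      | none =>
        cases hG : G.val ξ with
        | none => rfl
        | some η =>
          exfalso
          rw [hF, hG, hnone] at h1
          have hηo : η ∈ orbitP δ ξ := ⟨wd G, by rw [← hwd G]; exact hG⟩
          exact hne η hηo h1.symm
      | some η =>
        have hηo : η ∈ orbitP δ ξ := ⟨wd F, by rw [← hwd F]; exact hF⟩
        cases hG : G.val ξ with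
        | none =>
          exfalso
          rw [hF, hG, hnone] at h1
          exact hne η hηo h1
        | some η' =>
          have hη'o : η' ∈ orbitP δ ξ := ⟨wd G, by rw [← hwd G]; exact hG⟩
          rw [hF, hG] at h1
          exact congrArg some (hinjc η η' hηo hη'o h1)
    exact Finite.of_injective Ψ hinj
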